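/- Fix constants β ∈ (0, 1/2), γ ∈ (0, 1−2β), c > 0, k ∈ ℕ and C > 0. For each n, let F_0, F_1, …, F_{N−1} be pairwise disjoint nonempty subsets of {1,…,n} with N ≤ C·n^γ and |F_h| ≤ C·n^β for every h, and suppose that between every pair of vertices lying in two different blocks an edge is present independently with probability p = c/(n−2k+1). Let X_N be the total number of cycles among the blocks, i.e. the number (summed over m = 2,…,N and over cyclically ordered m-tuples of distinct blocks, counted up to rotation and reversal) of configurations in which the m blocks are joined cyclically by present cross-edges (for m = 2 this requires at least two present edges between the two blocks; for m ≥ 3 it requires m present edges, each joining two consecutive blocks of the cycle). Then E[X_N] → 0 and hence P(X_N > 0) → 0 as n → ∞. -/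

import Mathlib

open Filter
open scoped ENNReal Topology Classical

noncomputable section

/-- Disjoint blocks of vertices of `{1,…,n}` with independent Bernoulli(`q`) cross-edges
between vertices lying in two different blocks. -/
structure BlockEdgeModel (n : ℕ) (q : ℝ) (NB : ℕ) (F : Fin NB → Finset (Fin n)) where
  Ω : Type
  [mΩ : MeasurableSpace Ω]
  μ : MeasureTheory.Measure Ω
  prob : MeasureTheory.IsProbabilityMeasure μ
  edge : Fin n → Fin n → Ω → Bool
  edge_symm : ∀ u v ω, edge u v ω = edge v u ω
  edge_meas : ∀ u v, Measurable (edge u v)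
  edge_indep : ProbabilityTheory.iIndepFun (m := fun _ : {pr : Fin n × Fin n //
          pr.1 < pr.2 ∧ ∃ a b : Fin NB, a ≠ b ∧ pr.1 ∈ F a ∧ pr.2 ∈ F b} =>
        (inferInstance : MeasurableSpace Bool))
      (fun (pr : {pr : Fin n × Fin n //
          pr.1 < pr.2 ∧ ∃ a b : Fin NB, a ≠ b ∧ pr.1 ∈ F a ∧ pr.2 ∈ F b}) ω => edge pr.1.1 pr.1.2 ω) μ
  edge_bern : ∀ pr : {pr : Fin n × Fin n //
        pr.1 < pr.2 ∧ ∃ a b : Fin NB, a ≠ b ∧ pr.1 ∈ F a ∧ pr.2 ∈ F b},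
      μ {ω | edge pr.1.1 pr.1.2 ω = true} = ENNReal.ofReal q

attribute [instance] BlockEdgeModel.mΩ

namespace BlockEdgeModel

variable {n : ℕ} {q : ℝ} {NB : ℕ} {F : Fin NB → Finset (Fin n)} (M : BlockEdgeModel n q NB F)

/-- `X_N`: the total number of cycles among the blocks.  Cyclically ordered tuples of
`m ≥ 3` distinct blocks joined cyclically by present cross-edges are counted up to
rotation and reversal (hence the factor `2m`); for `m = 2` a cycle is a pair of distinct
blocks joined by at least two present cross-edges (ordered pairs, hence the factor 2). -/
def cycleCount (ω : M.Ω) : ℝ :=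
  (Nat.card {pr : Fin NB × Fin NB // pr.1 ≠ pr.2 ∧
      ∃ u v u' v' : Fin n, (u, v) ≠ (u', v') ∧ u ∈ F pr.1 ∧ u' ∈ F pr.1 ∧ v ∈ F pr.2 ∧
        v' ∈ F pr.2 ∧ M.edge u v ω = true ∧ M.edge u' v' ω = true} : ℝ) / 2 +
  ∑ m ∈ Finset.Icc 3 NB,
    (Nat.card {σ : ZMod m ↪ Fin NB //
        ∀ i : ZMod m, ∃ u ∈ F (σ i), ∃ w ∈ F (σ (i + 1)), M.edge u w ω = true} : ℝ) /
      (2 * m)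

end BlockEdgeModel

/-!
The cross edges are independent Bernoulli(`q`) variables, so a cycle through `m` given blocks,
which needs `m` distinct cross edges (two distinct ones for `m = 2`), has probability at most
`(B² q)^m` by a union bound over the choice of endpoints, where `B = C n^β` bounds the block
sizes; there are at most `N^m` tuples of blocks. With `x = N B² q ≍ n^(γ + 2β - 1) → 0` the
expected number of cycles is at most `x² + ∑_{m ≥ 3} x^m ≤ 2 x²`. The same bound holds for the
cycle count without its normalising divisions, and this integer-valued count is at least `1`
whenever `X_N > 0`, so Markov's inequality bounds `P(X_N > 0)` as well.
-/

open Function MeasureTheory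

lemma min_max_eq_or_eq_swap {α : Type*} [LinearOrder α] (p : α × α) :
    (min p.1 p.2, max p.1 p.2) = p ∨ (min p.1 p.2, max p.1 p.2) = p.swap := by
  rcases le_total p.1 p.2 with h | h
  · left; simp [h]
  · right; rw [min_eq_right h, max_eq_left h]; rfl

section Counting

variable {Ω ι : Type*} [Fintype ι]

lemma natCard_mem_eq_sum_indicator (A : ι → Set Ω) (ω : Ω) :
    (Nat.card {i // ω ∈ A i} : ℝ) = ∑ i, (A i).indicator 1 ω := by
  classical
  rw [Nat.card_eq_fintype_card, Fintype.card_subtype, Finset.card_filter]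
  push_cast
  exact Finset.sum_congr rfl fun i _ => by by_cases h : ω ∈ A i <;> simp [h]

variable [MeasurableSpace Ω] {μ : Measure Ω} [IsFiniteMeasure μ] {A : ι → Set Ω}

lemma integrable_natCard_mem (hA : ∀ i, MeasurableSet (A i)) :
    Integrable (fun ω => (Nat.card {i // ω ∈ A i} : ℝ)) μ := by
  simp only [natCard_mem_eq_sum_indicator]
  exact integrable_finsetSum _ fun i _ => (integrable_const 1).indicator (hA i)

lemma integral_natCard_mem (hA : ∀ i, MeasurableSet (A i)) :
    ∫ ω, (Nat.card {i // ω ∈ A i} : ℝ) ∂μ = ∑ i, μ.real (A i) := by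
  simp only [natCard_mem_eq_sum_indicator]
  rw [integral_finsetSum _ fun i _ => (integrable_const 1).indicator (hA i)]
  simp [integral_indicator_one (hA _)]

end Counting

lemma sum_Icc_three_pow_le_sq {x : ℝ} (hx₀ : 0 ≤ x) (hx : x ≤ 1 / 2) (N : ℕ) :
    ∑ m ∈ Finset.Icc 3 N, x ^ m ≤ x ^ 2 := calc
  ∑ m ∈ Finset.Icc 3 N, x ^ m ≤ x ^ 3 / (1 - x) := by
    rw [← Finset.Ico_add_one_right_eq_Icc]; exact geom_sum_Ico_le_of_lt_one hx₀ (by linarith)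
  _ ≤ x ^ 2 := by
    rw [div_le_iff₀ (by linarith)]; nlinarith [pow_nonneg hx₀ 2]

lemma tendsto_rpow_div_add_atTop_nhds_zero {s : ℝ} (hs : s < 1) (a : ℝ) :
    Tendsto (fun n : ℕ => (n : ℝ) ^ s / (n + a)) atTop (𝓝 0) := by
  have hpow : Tendsto (fun n : ℕ => (n : ℝ) ^ (s - 1)) atTop (𝓝 0) := by
    simpa [Function.comp_def] using
      (tendsto_rpow_neg_atTop (by linarith : 0 < 1 - s)).comp tendsto_natCast_atTop_atTop
  have hlim := hpow.mul (tendsto_natCast_div_add_atTop a)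
  rw [zero_mul] at hlim
  refine hlim.congr' ?_
  filter_upwards [eventually_gt_atTop 0] with n hn
  rw [Real.rpow_sub_one (by positivity), div_mul_div_cancel₀ (by positivity)]

section Blocks

variable {n NB : ℕ} {F : Fin NB → Finset (Fin n)}

lemma eq_of_mem_of_mem (hF : Pairwise (Disjoint on F)) {u : Fin n} {a b : Fin NB}
    (ha : u ∈ F a) (hb : u ∈ F b) : a = b :=
  by_contra fun hab => Finset.disjoint_left.1 (hF hab) ha hb

lemma eq_or_swap_of_sym2_eq (hF : Pairwise (Disjoint on F)) {p p' : Fin n × Fin n}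
    {a b a' b' : Fin NB} (hp : p ∈ F a ×ˢ F b) (hp' : p' ∈ F a' ×ˢ F b')
    (h : s(p.1, p.2) = s(p'.1, p'.2)) : (p = p' ∧ a = a' ∧ b = b') ∨ (a = b' ∧ b = a') := by
  obtain ⟨u, v⟩ := p
  obtain ⟨u', v'⟩ := p'
  rw [Finset.mem_product] at hp hp'
  rcases Sym2.eq_iff.1 h with ⟨rfl, rfl⟩ | ⟨rfl, rfl⟩
  · exact .inl ⟨rfl, eq_of_mem_of_mem hF hp.1 hp'.1, eq_of_mem_of_mem hF hp.2 hp'.2⟩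
  · exact .inr ⟨eq_of_mem_of_mem hF hp.1 hp'.2, eq_of_mem_of_mem hF hp.2 hp'.1⟩

variable (F) in
/-- The index type of the independent family `BlockEdgeModel.edge_indep`. -/
abbrev CrossEdge : Type :=
  {p : Fin n × Fin n // p.1 < p.2 ∧ ∃ a b : Fin NB, a ≠ b ∧ p.1 ∈ F a ∧ p.2 ∈ F b}

def CrossEdge.ofMem (hF : Pairwise (Disjoint on F)) {a b : Fin NB} (hab : a ≠ b)
    {p : Fin n × Fin n} (hp : p ∈ F a ×ˢ F b) : CrossEdge F :=
  ⟨(min p.1 p.2, max p.1 p.2), by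
    rw [Finset.mem_product] at hp
    refine ⟨min_lt_max.2 fun h => hab (eq_of_mem_of_mem hF hp.1 (h ▸ hp.2)), ?_⟩
    rcases min_max_eq_or_eq_swap p with h | h <;> rw [h]
    exacts [⟨a, b, hab, hp⟩, ⟨b, a, hab.symm, hp.2, hp.1⟩]⟩

lemma CrossEdge.ofMem_eq_or (hF : Pairwise (Disjoint on F)) {a b : Fin NB} (hab : a ≠ b)
    {p : Fin n × Fin n} (hp : p ∈ F a ×ˢ F b) :
    (ofMem hF hab hp).1 = p ∨ (ofMem hF hab hp).1 = p.swap :=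
  min_max_eq_or_eq_swap p

lemma CrossEdge.sym2_ofMem (hF : Pairwise (Disjoint on F)) {a b : Fin NB} (hab : a ≠ b)
    {p : Fin n × Fin n} (hp : p ∈ F a ×ˢ F b) :
    s((ofMem hF hab hp).1.1, (ofMem hF hab hp).1.2) = s(p.1, p.2) := by
  rcases ofMem_eq_or hF hab hp with h | h <;> rw [h]
  exact Sym2.eq_swap

end Blocks

attribute [instance] BlockEdgeModel.prob

namespace BlockEdgeModel

variable {n : ℕ} {q : ℝ} {NB : ℕ} {F : Fin NB → Finset (Fin n)} (M : BlockEdgeModel n q NB F)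

lemma edge_ofMem (hF : Pairwise (Disjoint on F)) {a b : Fin NB} (hab : a ≠ b)
    {p : Fin n × Fin n} (hp : p ∈ F a ×ˢ F b) (ω : M.Ω) :
    M.edge (CrossEdge.ofMem hF hab hp).1.1 (CrossEdge.ofMem hF hab hp).1.2 ω
      = M.edge p.1 p.2 ω := by
  rcases CrossEdge.ofMem_eq_or hF hab hp with h | h <;> rw [h]
  exact M.edge_symm _ _ _

def twoCycleEvent (pr : Fin NB × Fin NB) : Set M.Ω :=
  {ω | pr.1 ≠ pr.2 ∧ ∃ u v u' v' : Fin n, (u, v) ≠ (u', v') ∧ u ∈ F pr.1 ∧ u' ∈ F pr.1 ∧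
    v ∈ F pr.2 ∧ v' ∈ F pr.2 ∧ M.edge u v ω = true ∧ M.edge u' v' ω = true}

def cycleEvent {m : ℕ} (σ : ZMod m ↪ Fin NB) : Set M.Ω :=
  {ω | ∀ i : ZMod m, ∃ u ∈ F (σ i), ∃ w ∈ F (σ (i + 1)), M.edge u w ω = true}

lemma measurableSet_twoCycleEvent (pr : Fin NB × Fin NB) :
    MeasurableSet (M.twoCycleEvent pr) := by
  have := M.edge_meas
  exact measurableSet_setOfPred.2 (by fun_prop)

lemma measurableSet_cycleEvent {m : ℕ} [NeZero m] (σ : ZMod m ↪ Fin NB) :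
    MeasurableSet (M.cycleEvent σ) := by
  have := M.edge_meas
  exact measurableSet_setOfPred.2 (by fun_prop)

theorem measure_forall_edge (hF : Pairwise (Disjoint on F)) {κ : Type*} [Fintype κ]
    {a b : κ → Fin NB} (hab : ∀ i, a i ≠ b i) {t : κ → Fin n × Fin n}
    (ht : ∀ i, t i ∈ F (a i) ×ˢ F (b i)) (hinj : Injective fun i => s((t i).1, (t i).2)) :
    M.μ {ω | ∀ i, M.edge (t i).1 (t i).2 ω = true} = ENNReal.ofReal q ^ Fintype.card κ := by
  set e : κ → CrossEdge F := fun i => CrossEdge.ofMem hF (hab i) (ht i)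
  have he : Injective e := fun i j hij => hinj <| by
    simp only [← CrossEdge.sym2_ofMem hF (hab _) (ht _)]
    exact congrArg (fun x : CrossEdge F => s(x.1.1, x.1.2)) hij
  have hevent : {ω | ∀ i, M.edge (t i).1 (t i).2 ω = true}
      = ⋂ i, {ω | M.edge (e i).1.1 (e i).1.2 ω = true} := by
    ext ω; simp [e, M.edge_ofMem]
  rw [hevent, (M.edge_indep.precomp he).meas_iInter
    (s := fun i => {ω | M.edge (e i).1.1 (e i).1.2 ω = true})
    fun i => ⟨{true}, measurableSet_singleton _, rfl⟩]
  simp [M.edge_bern]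

theorem measureReal_biUnion_forall_edge_le (hF : Pairwise (Disjoint on F)) (hq : 0 ≤ q)
    {B : ℝ} (hB : ∀ a, ((F a).card : ℝ) ≤ B) {κ : Type*} [Fintype κ] [DecidableEq κ]
    {a b : κ → Fin NB} (hab : ∀ i, a i ≠ b i) {T : Finset (κ → Fin n × Fin n)}
    (hT : T ⊆ Fintype.piFinset fun i => F (a i) ×ˢ F (b i))
    (hinj : ∀ t ∈ T, Injective fun i => s((t i).1, (t i).2)) :
    M.μ.real (⋃ t ∈ T, {ω | ∀ i, M.edge (t i).1 (t i).2 ω = true})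
      ≤ (B ^ 2 * q) ^ Fintype.card κ := by
  have hmeas : ∀ t ∈ T, M.μ.real {ω | ∀ i, M.edge (t i).1 (t i).2 ω = true}
      = q ^ Fintype.card κ := fun t ht => by
    rw [measureReal_def, M.measure_forall_edge hF hab (Fintype.mem_piFinset.1 (hT ht)) (hinj t ht),
      ENNReal.toReal_pow, ENNReal.toReal_ofReal hq]
  have hcard : (T.card : ℝ) ≤ (B ^ 2) ^ Fintype.card κ := calc
    (T.card : ℝ) ≤ ∏ i, ((F (a i)).card * (F (b i)).card : ℝ) := by
      exact_mod_cast (Finset.card_le_card hT).trans_eq (by simp [Finset.card_product])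
    _ ≤ ∏ _i : κ, B ^ 2 := Finset.prod_le_prod (fun _ _ => by positivity) fun i _ =>
      sq B ▸ mul_le_mul (hB _) (hB _) (Nat.cast_nonneg _) ((Nat.cast_nonneg _).trans (hB (a i)))
    _ = (B ^ 2) ^ Fintype.card κ := by simp
  calc M.μ.real (⋃ t ∈ T, {ω | ∀ i, M.edge (t i).1 (t i).2 ω = true})
      ≤ ∑ t ∈ T, M.μ.real {ω | ∀ i, M.edge (t i).1 (t i).2 ω = true} :=
        measureReal_biUnion_finset_le _ _
    _ = T.card * q ^ Fintype.card κ := by rw [Finset.sum_congr rfl hmeas]; simp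
    _ ≤ (B ^ 2 * q) ^ Fintype.card κ := by
      rw [mul_pow]; exact mul_le_mul_of_nonneg_right hcard (by positivity)

theorem measureReal_twoCycleEvent_le (hF : Pairwise (Disjoint on F)) (hq : 0 ≤ q) {B : ℝ}
    (hB : ∀ a, ((F a).card : ℝ) ≤ B) (pr : Fin NB × Fin NB) :
    M.μ.real (M.twoCycleEvent pr) ≤ (B ^ 2 * q) ^ 2 := by
  by_cases hab : pr.1 = pr.2
  · simp only [twoCycleEvent, hab, ne_eq, not_true_eq_false, false_and, Set.ofPred_false,
      measureReal_empty]
    positivity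
  set T := (Fintype.piFinset fun _ : Fin 2 => F pr.1 ×ˢ F pr.2).filter Injective
  have hsub : M.twoCycleEvent pr ⊆ ⋃ t ∈ T, {ω | ∀ i, M.edge (t i).1 (t i).2 ω = true} := by
    rintro ω ⟨-, u, v, u', v', hne, hu, hu', hv, hv', he, he'⟩
    refine Set.mem_biUnion (x := ![(u, v), (u', v')])
      (Finset.mem_filter.2 ⟨?_, injective_pair_iff_ne.2 hne⟩) (Fin.forall_fin_two.2 ⟨he, he'⟩)
    exact Fintype.mem_piFinset.2 (Fin.forall_fin_two.2
      ⟨Finset.mem_product.2 ⟨hu, hv⟩, Finset.mem_product.2 ⟨hu', hv'⟩⟩)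
  have hinj : ∀ t ∈ T, Injective fun i => s((t i).1, (t i).2) := by
    intro t ht i j hij
    obtain ⟨hmem, htinj⟩ := Finset.mem_filter.1 ht
    rw [Fintype.mem_piFinset] at hmem
    rcases eq_or_swap_of_sym2_eq hF (hmem i) (hmem j) hij with h | h
    · exact htinj h.1
    · exact absurd h.1 hab
  simpa using (measureReal_mono hsub (measure_ne_top _ _)).trans
    (M.measureReal_biUnion_forall_edge_le hF hq hB (fun _ => hab) (Finset.filter_subset _ _) hinj)

theorem measureReal_cycleEvent_le (hF : Pairwise (Disjoint on F)) (hq : 0 ≤ q) {B : ℝ}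
    (hB : ∀ a, ((F a).card : ℝ) ≤ B) {m : ℕ} (hm : 3 ≤ m) (σ : ZMod m ↪ Fin NB) :
    M.μ.real (M.cycleEvent σ) ≤ (B ^ 2 * q) ^ m := by
  have : Fact (1 < m) := ⟨by omega⟩
  have hσ : ∀ i, σ i ≠ σ (i + 1) := fun i h => by simpa using σ.injective h
  have htwo : (2 : ZMod m) ≠ 0 := by
    simpa using (ZMod.natCast_eq_zero_iff 2 m).not.2 (Nat.not_dvd_of_pos_of_lt two_pos (by omega))
  set T := Fintype.piFinset fun i : ZMod m => F (σ i) ×ˢ F (σ (i + 1))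
  have hsub : M.cycleEvent σ ⊆ ⋃ t ∈ T, {ω | ∀ i, M.edge (t i).1 (t i).2 ω = true} := by
    intro ω hω
    choose u hu w hw he using hω
    exact Set.mem_biUnion (x := fun i => (u i, w i))
      (Fintype.mem_piFinset.2 fun i => Finset.mem_product.2 ⟨hu i, hw i⟩) he
  -- edges `i` and `j` traversed in opposite directions would force `i = j + 1 = i + 2`
  have hinj : ∀ t ∈ T, Injective fun i => s((t i).1, (t i).2) := by
    intro t ht i j hij
    rw [Fintype.mem_piFinset] at ht
    rcases eq_or_swap_of_sym2_eq hF (ht i) (ht j) hij with ⟨-, h, -⟩ | ⟨h₁, h₂⟩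
    · exact σ.injective h
    · have h₁ := σ.injective h₁
      have h₂ := σ.injective h₂
      exact absurd (by linear_combination h₂ - h₁) htwo
  simpa [ZMod.card] using (measureReal_mono hsub (measure_ne_top _ _)).trans
    (M.measureReal_biUnion_forall_edge_le hF hq hB hσ subset_rfl hinj)

/-- `cycleCount` without its normalising divisions: every cycle is counted once per
orientation and starting point. -/
def cycleEventCount (ω : M.Ω) : ℕ :=
  Nat.card {pr // ω ∈ M.twoCycleEvent pr} +
    ∑ m ∈ Finset.Icc 3 NB, Nat.card {σ : ZMod m ↪ Fin NB // ω ∈ M.cycleEvent σ}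

lemma cycleCount_nonneg (ω : M.Ω) : 0 ≤ M.cycleCount ω := by
  unfold cycleCount; positivity

lemma cycleCount_le_cycleEventCount (ω : M.Ω) : M.cycleCount ω ≤ M.cycleEventCount ω := by
  unfold cycleCount cycleEventCount
  push_cast
  gcongr with m hm
  · exact div_le_self (Nat.cast_nonneg _) one_le_two
  · refine div_le_self (Nat.cast_nonneg _) ?_
    have : (3 : ℝ) ≤ m := by exact_mod_cast (Finset.mem_Icc.1 hm).1
    linarith

lemma integrable_natCard_cycleEvent {m : ℕ} (hm : m ≠ 0) :
    Integrable (fun ω => (Nat.card {σ : ZMod m ↪ Fin NB // ω ∈ M.cycleEvent σ} : ℝ)) M.μ :=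
  have : NeZero m := ⟨hm⟩
  integrable_natCard_mem M.measurableSet_cycleEvent

lemma integrable_cycleEventCount : Integrable (fun ω => (M.cycleEventCount ω : ℝ)) M.μ := by
  simp only [cycleEventCount, Nat.cast_add, Nat.cast_sum]
  exact (integrable_natCard_mem M.measurableSet_twoCycleEvent).add
    (integrable_finsetSum _ fun m hm =>
      M.integrable_natCard_cycleEvent (by have := (Finset.mem_Icc.1 hm).1; omega))

theorem integral_cycleEventCount_le (hF : Pairwise (Disjoint on F)) (hq : 0 ≤ q) {B D : ℝ}
    (hB : ∀ a, ((F a).card : ℝ) ≤ B) (hD : (NB : ℝ) ≤ D) :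
    ∫ ω, (M.cycleEventCount ω : ℝ) ∂M.μ
      ≤ (D * B ^ 2 * q) ^ 2 + ∑ m ∈ Finset.Icc 3 NB, (D * B ^ 2 * q) ^ m := by
  have hpow : ∀ m, (NB : ℝ) ^ m * (B ^ 2 * q) ^ m ≤ (D * B ^ 2 * q) ^ m := fun m => by
    rw [← mul_pow, mul_assoc]; gcongr
  simp only [cycleEventCount, Nat.cast_add, Nat.cast_sum]
  have hint : ∀ m ∈ Finset.Icc 3 NB, Integrable
      (fun ω => (Nat.card {σ : ZMod m ↪ Fin NB // ω ∈ M.cycleEvent σ} : ℝ)) M.μ :=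
    fun m hm => M.integrable_natCard_cycleEvent (by have := (Finset.mem_Icc.1 hm).1; omega)
  rw [integral_add (integrable_natCard_mem M.measurableSet_twoCycleEvent)
      (integrable_finsetSum _ hint),
    integral_natCard_mem M.measurableSet_twoCycleEvent, integral_finsetSum _ hint]
  gcongr ?_ + ∑ m ∈ _, ?_ with m hm
  · calc ∑ pr, M.μ.real (M.twoCycleEvent pr) ≤ ∑ _pr : Fin NB × Fin NB, (B ^ 2 * q) ^ 2 :=
          Finset.sum_le_sum fun pr _ => M.measureReal_twoCycleEvent_le hF hq hB pr
      _ = (NB : ℝ) ^ 2 * (B ^ 2 * q) ^ 2 := by simp [sq]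
      _ ≤ _ := hpow 2
  · have hm3 := (Finset.mem_Icc.1 hm).1
    have : NeZero m := ⟨by omega⟩
    rw [integral_natCard_mem M.measurableSet_cycleEvent]
    calc ∑ σ : ZMod m ↪ Fin NB, M.μ.real (M.cycleEvent σ)
        ≤ ∑ _σ : ZMod m ↪ Fin NB, (B ^ 2 * q) ^ m :=
          Finset.sum_le_sum fun σ _ => M.measureReal_cycleEvent_le hF hq hB hm3 σ
      _ ≤ (NB : ℝ) ^ m * (B ^ 2 * q) ^ m := by
          rw [Finset.sum_const, nsmul_eq_mul, Finset.card_univ, Fintype.card_embedding_eq]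
          gcongr
          simpa using (Nat.cast_le (α := ℝ)).2 (Nat.descFactorial_le_pow NB m)
      _ ≤ _ := hpow m

theorem integral_cycleEventCount_le_two_mul_sq (hF : Pairwise (Disjoint on F)) (hq : 0 ≤ q)
    {B D : ℝ} (hB : ∀ a, ((F a).card : ℝ) ≤ B) (hD : (NB : ℝ) ≤ D) (hx : D * B ^ 2 * q ≤ 1 / 2) :
    ∫ ω, (M.cycleEventCount ω : ℝ) ∂M.μ ≤ 2 * (D * B ^ 2 * q) ^ 2 := by
  have hx₀ : 0 ≤ D * B ^ 2 * q := by
    have := (Nat.cast_nonneg NB).trans hD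
    positivity
  linarith [M.integral_cycleEventCount_le hF hq hB hD, sum_Icc_three_pow_le_sq hx₀ hx NB]

lemma integral_cycleCount_le :
    ∫ ω, M.cycleCount ω ∂M.μ ≤ ∫ ω, (M.cycleEventCount ω : ℝ) ∂M.μ :=
  integral_mono_of_nonneg (.of_forall M.cycleCount_nonneg) M.integrable_cycleEventCount
    (.of_forall M.cycleCount_le_cycleEventCount)

lemma measureReal_cycleCount_pos_le :
    M.μ.real {ω | 0 < M.cycleCount ω} ≤ ∫ ω, (M.cycleEventCount ω : ℝ) ∂M.μ := by
  have hsub : {ω | 0 < M.cycleCount ω} ⊆ {ω | 1 ≤ (M.cycleEventCount ω : ℝ)} := by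
    intro ω (hω : 0 < M.cycleCount ω)
    have : 0 < M.cycleEventCount ω := by
      exact_mod_cast hω.trans_le (M.cycleCount_le_cycleEventCount ω)
    exact_mod_cast this
  have markov := mul_meas_ge_le_integral_of_nonneg (.of_forall fun _ => Nat.cast_nonneg _)
    M.integrable_cycleEventCount 1
  rw [one_mul] at markov
  exact (measureReal_mono hsub (measure_ne_top _ _)).trans markov

end BlockEdgeModel

theorem expected_cycles_vanish_general (β γ c C : ℝ) (k : ℕ)
    (hγ : γ < 1 - 2 * β)
    (hc : 0 < c)
    (NB : ℕ → ℕ) (F : ∀ n : ℕ, Fin (NB n) → Finset (Fin n))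
    (hNB : ∀ n : ℕ, (NB n : ℝ) ≤ C * (n : ℝ) ^ γ)
    (hFcard : ∀ n a, ((F n a).card : ℝ) ≤ C * (n : ℝ) ^ β)
    (hFdisj : ∀ n, ∀ a b, a ≠ b → Disjoint (F n a) (F n b)) :
    ∀ ε : ℝ, 0 < ε → ∃ N : ℕ, ∀ n : ℕ, N ≤ n →
      ∀ M : BlockEdgeModel n (c / ((n : ℝ) - 2 * k + 1)) (NB n) (F n),
        |∫ ω, M.cycleCount ω ∂M.μ| < ε ∧ (M.μ {ω | 0 < M.cycleCount ω}).toReal < ε := by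
  intro ε hε
  set x : ℕ → ℝ := fun n => C * (n : ℝ) ^ γ * (C * (n : ℝ) ^ β) ^ 2 * (c / ((n : ℝ) - 2 * k + 1))
  have hx : Tendsto x atTop (𝓝 0) := by
    have h := (tendsto_rpow_div_add_atTop_nhds_zero (s := γ + 2 * β) (by linarith)
      (1 - 2 * k)).const_mul (c * C ^ 3)
    rw [mul_zero] at h
    refine h.congr' ?_
    filter_upwards [eventually_gt_atTop 0] with n hn
    rw [show γ + 2 * β = γ + β + β by ring, Real.rpow_add (by positivity),
      Real.rpow_add (by positivity)]
    ring
  obtain ⟨N, hN⟩ := eventually_atTop.1 <| (hx.eventually (gt_mem_nhds one_half_pos)).and <|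
    (((hx.pow 2).const_mul 2).eventually (gt_mem_nhds (by simpa using hε))).and
      (eventually_ge_atTop (2 * k))
  refine ⟨N, fun n hn M => ?_⟩
  obtain ⟨hhalf, hsmall, hk⟩ := hN n hn
  have hq : 0 ≤ c / ((n : ℝ) - 2 * k + 1) := by
    have : (2 * k : ℝ) ≤ n := by exact_mod_cast hk
    exact div_nonneg hc.le (by linarith)
  have hS := M.integral_cycleEventCount_le_two_mul_sq (hFdisj n) hq (hFcard n) (hNB n) hhalf.le
  refine ⟨?_, (M.measureReal_cycleCount_pos_le.trans hS).trans_lt hsmall⟩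
  rw [abs_of_nonneg (integral_nonneg M.cycleCount_nonneg)]
  exact (M.integral_cycleCount_le.trans hS).trans_lt hsmall

theorem expected_cycles_vanish (β γ c C : ℝ) (k : ℕ)
    (hβ0 : 0 < β) (hβ : β < 1/2) (hγ0 : 0 < γ) (hγ : γ < 1 - 2 * β)
    (hc : 0 < c) (hC : 0 < C)
    (NB : ℕ → ℕ) (F : ∀ n : ℕ, Fin (NB n) → Finset (Fin n))
    (hNB : ∀ n : ℕ, (NB n : ℝ) ≤ C * (n : ℝ) ^ γ)
    (hFne : ∀ n a, (F n a).Nonempty)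
    (hFcard : ∀ n a, ((F n a).card : ℝ) ≤ C * (n : ℝ) ^ β)
    (hFdisj : ∀ n, ∀ a b, a ≠ b → Disjoint (F n a) (F n b)) :
    ∀ ε : ℝ, 0 < ε → ∃ N : ℕ, ∀ n : ℕ, N ≤ n →
      ∀ M : BlockEdgeModel n (c / ((n : ℝ) - 2 * k + 1)) (NB n) (F n),
        |∫ ω, M.cycleCount ω ∂M.μ| < ε ∧ (M.μ {ω | 0 < M.cycleCount ω}).toReal < ε :=
  expected_cycles_vanish_general β γ c C k hγ hc NB F hNB hFcard hFdisj
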